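/- Let z > 0 and let a ≤ b and c ≤ d be real numbers. Define f(x, y) := -(1/2)·z²·exp(-(x - y)²/z²) - (√π/2)·z·(x - y)·erf((x - y)/z), where erf(t) := (2/√π) ∫_0^t exp(-u²) du. Then ∫_a^b ∫_c^d exp(-(x - y)²/z²) dy dx = f(b, d) - f(b, c) - f(a, d) + f(a, c). -/

import Mathlib

/-!
Write `k t = exp (-t² / z²)`. The function `G t = (√π / 2) z erf (t / z)` is a primitive of
`k`, and `F z t 0 = -(z² / 2) k t - t G t` is a primitive of `-G`. Since the integrand depends
only on `x - y`, integrating first in `y` and then in `x` turns the double integral into the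
second difference of `t ↦ F z t 0` over the corners `x - y` of the rectangle.
-/

open MeasureTheory Real

/-- The error function `erf t = (2/√π) ∫₀^t exp(-u²) du`. -/
noncomputable def erf (t : ℝ) : ℝ :=
  (2 / Real.sqrt π) * ∫ u in (0 : ℝ)..t, Real.exp (-u ^ 2)

/-- The mixed antiderivative `f(x,y)` of the Gaussian kernel used by Verdict. -/
noncomputable def F (z x y : ℝ) : ℝ :=
  -(1 / 2) * (z ^ 2 * Real.exp (-(x - y) ^ 2 / z ^ 2)) -
    (Real.sqrt π / 2) * z * (x - y) * erf ((x - y) / z)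

section DifferenceKernel

variable {E : Type*} [NormedAddCommGroup E] [NormedSpace ℝ E] [CompleteSpace E]
  {K G H : ℝ → E}

theorem integral_comp_sub_eq_of_hasDerivAt (hG : ∀ t, HasDerivAt G (K t) t) (hK : Continuous K)
    (x c d : ℝ) : ∫ y in c..d, K (x - y) = G (x - c) - G (x - d) := by
  rw [intervalIntegral.integral_comp_sub_left K x,
    intervalIntegral.integral_eq_sub_of_hasDerivAt (fun t _ => hG t) (hK.intervalIntegrable _ _)]

theorem integral_integral_comp_sub_eq_of_hasDerivAt (hG : ∀ t, HasDerivAt G (K t) t)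
    (hH : ∀ t, HasDerivAt H (-G t) t) (hK : Continuous K) (a b c d : ℝ) :
    ∫ x in a..b, ∫ y in c..d, K (x - y) =
      H (b - d) - H (b - c) - H (a - d) + H (a - c) := by
  have hGc : Continuous G := continuous_iff_continuousAt.2 fun t => (hG t).continuousAt
  have hprimitive (e : ℝ) : ∫ x in a..b, G (x - e) = H (a - e) - H (b - e) := by
    rw [intervalIntegral.integral_comp_sub_right G e,
      intervalIntegral.integral_eq_sub_of_hasDerivAt (fun t _ => (hH t).neg.congr_deriv (neg_neg _))
        (hGc.intervalIntegrable _ _), Pi.neg_apply, Pi.neg_apply, neg_sub_neg]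
  have hint (e : ℝ) : IntervalIntegrable (fun x => G (x - e)) volume a b :=
    (hGc.comp (continuous_sub_right e)).intervalIntegrable _ _
  simp only [integral_comp_sub_eq_of_hasDerivAt hG hK]
  rw [intervalIntegral.integral_sub (hint c) (hint d), hprimitive, hprimitive]
  abel

end DifferenceKernel

theorem hasDerivAt_erf (t : ℝ) : HasDerivAt erf (2 / √π * exp (-t ^ 2)) t := by
  have hk : Continuous fun u : ℝ => exp (-u ^ 2) := by fun_prop
  exact ((hk.integral_hasStrictDerivAt 0 t).hasDerivAt).const_mul (2 / √π)

noncomputable def gaussianPrimitive (z t : ℝ) : ℝ :=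
  √π / 2 * z * erf (t / z)

theorem hasDerivAt_gaussianPrimitive {z : ℝ} (hz : z ≠ 0) (t : ℝ) :
    HasDerivAt (gaussianPrimitive z) (exp (-t ^ 2 / z ^ 2)) t := by
  have h := ((hasDerivAt_erf (t / z)).comp t ((hasDerivAt_id t).div_const z)).const_mul
    (√π / 2 * z)
  refine h.congr_deriv ?_
  have hπ : √π ≠ 0 := (sqrt_pos.2 pi_pos).ne'
  rw [div_pow, neg_div]
  field_simp

theorem hasDerivAt_F_sub_zero {z : ℝ} (hz : z ≠ 0) (t : ℝ) :
    HasDerivAt (fun t => F z t 0) (-gaussianPrimitive z t) t := by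
  have hk : HasDerivAt (fun t : ℝ => exp (-t ^ 2 / z ^ 2))
      (exp (-t ^ 2 / z ^ 2) * (-(2 * t) / z ^ 2)) t := by
    simpa using (((hasDerivAt_id t).pow 2).neg.div_const (z ^ 2)).exp
  have h := (hk.const_mul (-(1 / 2) * z ^ 2)).sub
    ((hasDerivAt_id' t).mul (hasDerivAt_gaussianPrimitive hz t))
  have hF : (fun t => F z t 0) =
      fun t => -(1 / 2) * z ^ 2 * exp (-t ^ 2 / z ^ 2) - t * gaussianPrimitive z t := by
    funext t
    simp only [F, gaussianPrimitive, sub_zero]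
    ring
  rw [hF]
  refine h.congr_deriv ?_
  field_simp
  ring

theorem double_integral_gaussian_kernel_general (z : ℝ) (hz : 0 < z)
    (a b c d : ℝ) :
    (∫ x in a..b, ∫ y in c..d, Real.exp (-(x - y) ^ 2 / z ^ 2)) =
      F z b d - F z b c - F z a d + F z a c := by
  have hF (x y : ℝ) : F z x y = F z (x - y) 0 := by simp only [F, sub_zero]
  rw [hF b d, hF b c, hF a d, hF a c]
  exact integral_integral_comp_sub_eq_of_hasDerivAt (hasDerivAt_gaussianPrimitive hz.ne')
    (hasDerivAt_F_sub_zero hz.ne') (by fun_prop) a b c d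

/-- Closed form of the double integral of the Gaussian kernel over a rectangle:
`∫_a^b ∫_c^d exp(-(x-y)²/z²) dy dx = f(b,d) - f(b,c) - f(a,d) + f(a,c)`. -/
theorem double_integral_gaussian_kernel (z : ℝ) (hz : 0 < z)
    (a b c d : ℝ) (hab : a ≤ b) (hcd : c ≤ d) :
    (∫ x in a..b, ∫ y in c..d, Real.exp (-(x - y) ^ 2 / z ^ 2)) =
      F z b d - F z b c - F z a d + F z a c :=
  double_integral_gaussian_kernel_general z hz a b c d
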